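/- Let l ∈ ℕ with l ≥ 2 and let μ ∈ ℝ with μ ≠ 0. Define the polynomials Q(x) = Σ_{n=0}^{l+2} ((l−1)_n·(−l−2)_n)/((−1−iμ)_n · n!) · xⁿ and P(x) = Σ_{n=0}^{l+2} ((l−1)_n·(−l−2)_n)/((−1+iμ)_n · n!) · (1−x)ⁿ (both well defined, since (−1±iμ)_n ≠ 0 because −1±iμ is not real). Then P(x) = T·Q(x) for all x ∈ ℂ, where T := (∏_{k=−l}^{1} (k+iμ)) / (∏_{k=−1}^{l} (k+iμ)); in particular T ≠ 0 and |T| = 1. -/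

import Mathlib

/-- The zero-frequency transmission coefficient of the right event horizon. -/
noncomputable def heunT (l : ℕ) (μ : ℝ) : ℂ :=
  (∏ k ∈ Finset.Icc (-(l : ℤ)) 1, ((k : ℂ) + Complex.I * (μ : ℂ))) /
    ∏ k ∈ Finset.Icc (-1 : ℤ) (l : ℤ), ((k : ℂ) + Complex.I * (μ : ℂ))

/-- The hypergeometric polynomial `F(l-1, -l-2, -1-iμ; x)`. -/
noncomputable def heunQ (l : ℕ) (μ : ℝ) (x : ℂ) : ℂ :=
  ∑ n ∈ Finset.range (l + 3),
    ((ascPochhammer ℂ n).eval ((l : ℂ) - 1) * (ascPochhammer ℂ n).eval (-(l : ℂ) - 2)) /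
        ((ascPochhammer ℂ n).eval (-1 - Complex.I * (μ : ℂ)) * (n.factorial : ℂ)) * x ^ n

/-- The hypergeometric polynomial `F(l-1, -l-2, -1+iμ; 1-x)`. -/
noncomputable def heunP (l : ℕ) (μ : ℝ) (x : ℂ) : ℂ :=
  ∑ n ∈ Finset.range (l + 3),
    ((ascPochhammer ℂ n).eval ((l : ℂ) - 1) * (ascPochhammer ℂ n).eval (-(l : ℂ) - 2)) /
        ((ascPochhammer ℂ n).eval (-1 + Complex.I * (μ : ℂ)) * (n.factorial : ℂ)) * (1 - x) ^ n

/-!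
Both polynomials are terminating Gauss series `F(a, -N; c; ·)` with `a = l - 1`, `N = l + 2`,
`c = -1 + iμ`, and the claim is the connection formula
`F(a, -N; c; 1 - x) = (c - a)_N / (c)_N · F(a, -N; 1 + a - c - N; x)`.
Expanding `(1 - x)^n` binomially and shifting `n = k + j`, the coefficient of `x^k` becomes a
multiple of a terminating series at `1`, which Chu–Vandermonde sums:
`F(α, -M; γ; 1) = (γ - α)_M / (γ)_M`. The reflection `(z)_n = (-1)^n (1 - z - n)_n` then
matches it with the right-hand side. Since `1 + a - c - N = -1 - iμ = conj c` and
`c - a = -l + iμ`, the same reflection gives `T = (-1)^N conj ((c)_N) / (c)_N`, so `|T| = 1`.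
-/

open Finset Polynomial

section Pochhammer
variable {R : Type*} [CommRing R]

theorem descPochhammer_eval_add (r s : R) (n : ℕ) :
    (descPochhammer R n).eval (r + s) = ∑ ij ∈ antidiagonal n,
      (n.choose ij.1 : R) * ((descPochhammer R ij.1).eval r * (descPochhammer R ij.2).eval s) := by
  simp only [← descPochhammer_map (algebraMap ℤ R), eval_map_algebraMap, aeval_eq_smeval]
  exact Ring.descPochhammer_smeval_add n (Commute.all r s)

theorem ascPochhammer_eval_add_natCast (z : R) (m n : ℕ) :
    (ascPochhammer R (m + n)).eval z =
      (ascPochhammer R m).eval z * (ascPochhammer R n).eval (z + m) := by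
  rw [← ascPochhammer_mul, eval_mul, eval_comp]
  simp

theorem ascPochhammer_eval_neg_natCast (M j : ℕ) :
    (ascPochhammer R j).eval (-(M : R)) = (-1) ^ j * j.factorial * M.choose j := by
  rw [ascPochhammer_eval_neg_eq_descPochhammer, descPochhammer_eval_eq_descFactorial,
    Nat.descFactorial_eq_factorial_mul_choose]
  push_cast
  ring

theorem sum_range_choose_mul_ascPochhammer (α γ : R) (M : ℕ) :
    ∑ j ∈ range (M + 1), (-1) ^ j * (M.choose j : R) * (ascPochhammer R j).eval α *
      (ascPochhammer R (M - j)).eval (γ + j) = (ascPochhammer R M).eval (γ - α) := by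
  have vandermonde := descPochhammer_eval_add (-α) (γ + M - 1) M
  rw [descPochhammer_eval_eq_ascPochhammer, show -α + (γ + M - 1) - M + 1 = γ - α by ring,
    Nat.sum_antidiagonal_eq_sum_range_succ_mk] at vandermonde
  rw [vandermonde]
  refine sum_congr rfl fun j hj => ?_
  have hneg : (descPochhammer R j).eval (-α) = (-1) ^ j * (ascPochhammer R j).eval α := by
    rw [← neg_neg α, ascPochhammer_eval_neg_eq_descPochhammer, neg_neg, ← mul_assoc,
      ← mul_pow]
    simp
  have hshift :
      (descPochhammer R (M - j)).eval (γ + M - 1) = (ascPochhammer R (M - j)).eval (γ + j) := by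
    rw [descPochhammer_eval_eq_ascPochhammer, Nat.cast_sub (Nat.lt_succ_iff.1 (mem_range.1 hj))]
    ring_nf
  rw [hneg, hshift]
  ring

theorem ascPochhammer_eval_reflect (z : R) (n : ℕ) :
    (ascPochhammer R n).eval z = (-1) ^ n * (ascPochhammer R n).eval (-z - n + 1) := by
  rw [← descPochhammer_eval_eq_ascPochhammer, ← neg_neg z,
    ascPochhammer_eval_neg_eq_descPochhammer, neg_neg]

theorem ascPochhammer_eval_ne_zero_of_le {z : R} {k N : ℕ} (h : (ascPochhammer R N).eval z ≠ 0)
    (hk : k ≤ N) :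
    (ascPochhammer R k).eval z ≠ 0 ∧ (ascPochhammer R (N - k)).eval (z + k) ≠ 0 := by
  rw [← Nat.add_sub_cancel' hk, ascPochhammer_eval_add_natCast] at h
  exact ⟨left_ne_zero_of_mul h, right_ne_zero_of_mul h⟩

theorem sum_range_mul_one_sub_pow (f : ℕ → R) (N : ℕ) (x : R) :
    ∑ n ∈ range (N + 1), f n * (1 - x) ^ n =
      ∑ k ∈ range (N + 1), (-1) ^ k * (∑ n ∈ range (N + 1), f n * n.choose k) * x ^ k := by
  have binomial : ∀ n ∈ range (N + 1),
      (1 - x) ^ n = ∑ k ∈ range (N + 1), (-1) ^ k * (n.choose k : R) * x ^ k := by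
    intro n hn
    rw [sub_eq_neg_add, add_pow]
    refine sum_subset (range_subset_range.2 (mem_range.1 hn)) (fun k hk hnk => ?_) |>.trans
      (sum_congr rfl fun k _ => by rw [neg_pow]; ring)
    simp only [mem_range, not_lt] at hnk
    simp [Nat.choose_eq_zero_of_lt hnk]
  rw [sum_congr rfl fun n hn => by rw [binomial n hn, mul_sum], sum_comm]
  refine sum_congr rfl fun k _ => ?_
  rw [mul_sum, sum_mul]
  exact sum_congr rfl fun n _ => by ring

theorem prod_Icc_intCast_add (a : ℤ) (n : ℕ) (w : R) :
    ∏ k ∈ Icc a (a + n - 1), ((k : R) + w) = (ascPochhammer R n).eval (a + w) := by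
  induction n with
  | zero => simp
  | succ n ih =>
    rw [show a + ((n + 1 : ℕ) : ℤ) - 1 = a + n - 1 + 1 by push_cast; ring,
      ← insert_Icc_right_eq_Icc_add_one (by omega), prod_insert (by simp), ih,
      ascPochhammer_succ_eval]
    push_cast
    ring

theorem ascPochhammer_eval_map {S : Type*} [CommRing S] (f : R →+* S) (z : R) (n : ℕ) :
    (ascPochhammer S n).eval (f z) = f ((ascPochhammer R n).eval z) := by
  rw [ascPochhammer_eval₂ f, eval₂_at_apply]

end Pochhammer

noncomputable section Hypergeometric
variable {K : Type*} [Field K] [CharZero K]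

def hypergeometricCoeff (a b c : K) (n : ℕ) : K :=
  (ascPochhammer K n).eval a * (ascPochhammer K n).eval b /
    ((ascPochhammer K n).eval c * n.factorial)

def terminatingHypergeometric (a c : K) (N : ℕ) (x : K) : K :=
  ∑ n ∈ range (N + 1), hypergeometricCoeff a (-N) c n * x ^ n

theorem hypergeometricCoeff_add_mul_choose (a b c : K) (k j : ℕ) :
    hypergeometricCoeff a b c (k + j) * (k + j).choose k =
      hypergeometricCoeff a b c k * hypergeometricCoeff (a + k) (b + k) (c + k) j := by
  have hchoose : ((k + j).choose k : K) ≠ 0 :=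
    Nat.cast_ne_zero.2 (Nat.choose_pos (Nat.le_add_right k j)).ne'
  calc _ = hypergeometricCoeff a b c k * hypergeometricCoeff (a + k) (b + k) (c + k) j *
        (((k + j).choose k : K) * ((k + j).choose k : K)⁻¹) := by
        simp only [hypergeometricCoeff, ascPochhammer_eval_add_natCast, ← Nat.choose_symm_add,
          ← Nat.add_choose_mul_factorial_mul_factorial, Nat.cast_mul]
        ring
    _ = _ := by rw [mul_inv_cancel₀ hchoose, mul_one]

theorem sum_range_hypergeometricCoeff_neg_natCast (α γ : K) (M : ℕ)
    (hγ : (ascPochhammer K M).eval γ ≠ 0) :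
    ∑ j ∈ range (M + 1), hypergeometricCoeff α (-M) γ j =
      (ascPochhammer K M).eval (γ - α) / (ascPochhammer K M).eval γ := by
  rw [eq_div_iff hγ, ← sum_range_choose_mul_ascPochhammer, sum_mul]
  refine sum_congr rfl fun j hj => ?_
  have hjM := Nat.lt_succ_iff.1 (mem_range.1 hj)
  obtain ⟨hγj, -⟩ := ascPochhammer_eval_ne_zero_of_le hγ hjM
  rw [hypergeometricCoeff, ascPochhammer_eval_neg_natCast, ← Nat.add_sub_cancel' hjM,
    ascPochhammer_eval_add_natCast, Nat.add_sub_cancel' hjM]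
  have hfact : (j.factorial : K) ≠ 0 := Nat.cast_ne_zero.2 j.factorial_ne_zero
  field_simp

theorem neg_one_pow_mul_sum_hypergeometricCoeff_mul_choose (a c : K) {N k : ℕ} (hk : k ≤ N)
    (hc : (ascPochhammer K N).eval c ≠ 0) (hc' : (ascPochhammer K N).eval (1 + a - c - N) ≠ 0) :
    (-1) ^ k * ∑ n ∈ range (N + 1), hypergeometricCoeff a (-N) c n * n.choose k =
      (ascPochhammer K N).eval (c - a) / (ascPochhammer K N).eval c *
        hypergeometricCoeff a (-N) (1 + a - c - N) k := by
  obtain ⟨hck, hckM⟩ := ascPochhammer_eval_ne_zero_of_le hc hk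
  have hc'k := (ascPochhammer_eval_ne_zero_of_le hc' hk).1
  obtain ⟨M, rfl⟩ := Nat.exists_eq_add_of_le hk
  rw [Nat.add_sub_cancel_left] at hckM
  have hlow : ∑ n ∈ range k, hypergeometricCoeff a (-(k + M : ℕ)) c n * n.choose k = 0 :=
    sum_eq_zero fun n hn => by simp [Nat.choose_eq_zero_of_lt (mem_range.1 hn)]
  have hsplit : (ascPochhammer K (k + M)).eval (c - a) =
      (-1) ^ k * (ascPochhammer K M).eval (c - a) *
        (ascPochhammer K k).eval (1 + a - c - (k + M : ℕ)) := by
    rw [add_comm k M, ascPochhammer_eval_add_natCast, ascPochhammer_eval_reflect (c - a + M),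
      show -(c - a + M) - k + 1 = 1 + a - c - ((M + k : ℕ) : K) by push_cast; ring]
    ring
  rw [add_assoc, sum_range_add, hlow, zero_add]
  simp_rw [hypergeometricCoeff_add_mul_choose]
  rw [← mul_sum, show -((k + M : ℕ) : K) + k = -M by push_cast; ring,
    sum_range_hypergeometricCoeff_neg_natCast _ _ _ hckM, add_sub_add_right_eq_sub,
    ascPochhammer_eval_add_natCast c, hsplit]
  simp only [hypergeometricCoeff]
  field_simp

theorem terminatingHypergeometric_one_sub (a c : K) (N : ℕ)
    (hc : (ascPochhammer K N).eval c ≠ 0) (hc' : (ascPochhammer K N).eval (1 + a - c - N) ≠ 0)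
    (x : K) :
    terminatingHypergeometric a c N (1 - x) =
      (ascPochhammer K N).eval (c - a) / (ascPochhammer K N).eval c *
        terminatingHypergeometric a (1 + a - c - N) N x := by
  rw [terminatingHypergeometric, sum_range_mul_one_sub_pow, terminatingHypergeometric, mul_sum]
  refine sum_congr rfl fun k hk => ?_
  rw [neg_one_pow_mul_sum_hypergeometricCoeff_mul_choose a c (Nat.lt_succ_iff.1 (mem_range.1 hk))
    hc hc', mul_assoc]

end Hypergeometric

open Complex ComplexConjugate

theorem ascPochhammer_eval_ne_zero_of_im_ne_zero {z : ℂ} (hz : z.im ≠ 0) (n : ℕ) :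
    (ascPochhammer ℂ n).eval z ≠ 0 := by
  rw [Ne, ascPochhammer_eval_eq_zero_iff]
  rintro ⟨k, -, hk⟩
  exact hz (by simpa using congrArg im hk)

theorem heunQ_eq (l : ℕ) (μ : ℝ) (x : ℂ) :
    heunQ l μ x = terminatingHypergeometric ((l : ℂ) - 1) (-1 - I * μ) (l + 2) x := by
  rw [heunQ, terminatingHypergeometric,
    show -((l + 2 : ℕ) : ℂ) = -(l : ℂ) - 2 by push_cast; ring]
  rfl

theorem heunP_eq (l : ℕ) (μ : ℝ) (x : ℂ) :
    heunP l μ x = terminatingHypergeometric ((l : ℂ) - 1) (-1 + I * μ) (l + 2) (1 - x) := by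
  rw [heunP, terminatingHypergeometric,
    show -((l + 2 : ℕ) : ℂ) = -(l : ℂ) - 2 by push_cast; ring]
  rfl

theorem heunT_eq (l : ℕ) (μ : ℝ) :
    heunT l μ = (ascPochhammer ℂ (l + 2)).eval (-l + I * μ) /
      (ascPochhammer ℂ (l + 2)).eval (-1 + I * μ) := by
  have hnum := prod_Icc_intCast_add (-(l : ℤ)) (l + 2) (I * μ)
  have hden := prod_Icc_intCast_add (-1 : ℤ) (l + 2) (I * μ)
  rw [show -(l : ℤ) + ((l + 2 : ℕ) : ℤ) - 1 = 1 by push_cast; ring] at hnum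
  rw [show (-1 : ℤ) + ((l + 2 : ℕ) : ℤ) - 1 = l by push_cast; ring] at hden
  rw [heunT, hnum, hden]
  push_cast
  rfl

theorem heunT_eq_conj_div (l : ℕ) (μ : ℝ) :
    heunT l μ = (-1) ^ (l + 2) * conj ((ascPochhammer ℂ (l + 2)).eval (-1 + I * μ)) /
      (ascPochhammer ℂ (l + 2)).eval (-1 + I * μ) := by
  rw [heunT_eq, ascPochhammer_eval_reflect, ← ascPochhammer_eval_map]
  congr 3
  simp only [map_add, map_neg, map_one, map_mul, conj_I, conj_ofReal]
  push_cast
  ring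

theorem stmt_4 (l : ℕ) (μ : ℝ) (hμ : μ ≠ 0) :
    (∀ x : ℂ, heunP l μ x = heunT l μ * heunQ l μ x) ∧
      heunT l μ ≠ 0 ∧ ‖heunT l μ‖ = 1 := by
  have hc : (ascPochhammer ℂ (l + 2)).eval (-1 + I * μ) ≠ 0 :=
    ascPochhammer_eval_ne_zero_of_im_ne_zero (by simpa using hμ) _
  have hc' : (ascPochhammer ℂ (l + 2)).eval (-1 - I * μ) ≠ 0 :=
    ascPochhammer_eval_ne_zero_of_im_ne_zero (by simpa using hμ) _
  refine ⟨fun x => ?_, ?_, ?_⟩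
  · have hflip : 1 + ((l : ℂ) - 1) - (-1 + I * μ) - ((l + 2 : ℕ) : ℂ) = -1 - I * μ := by
      push_cast; ring
    have hconn := terminatingHypergeometric_one_sub ((l : ℂ) - 1) (-1 + I * μ) (l + 2) hc
      (by rwa [hflip]) x
    rw [hflip, show -1 + I * μ - ((l : ℂ) - 1) = -l + I * μ by ring] at hconn
    rw [heunP_eq, hconn, heunQ_eq, heunT_eq]
  · rw [heunT_eq_conj_div]
    exact div_ne_zero (by simpa using hc) hc
  · rw [heunT_eq_conj_div, norm_div, norm_mul, norm_pow, norm_neg, norm_one, one_pow, one_mul,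
      norm_conj, div_self (norm_ne_zero_iff.2 hc)]
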